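/- Let 𝒞 be a pretriangulated category with a weight structure, let H' be a class of objects of the heart 𝒞^{w=0} closed under finite direct sums, and let 𝒞' be the smallest strictly full triangulated subcategory of 𝒞 containing H' (closed under isomorphisms, shifts and cones). Then every object X of 𝒞' admits a weight decomposition inside 𝒞': there is a distinguished triangle A → X → X' → A[1] with A an object of 𝒞' lying in 𝒞^{w≥0} and X' an object of 𝒞' lying in 𝒞^{w<0}. -/

import Mathlib

open CategoryTheory Category Limits Pretriangulated

/-- A weight structure on a pretriangulated category. -/
structure WeightStructure (C : Type*) [Category C] [HasZeroObject C] [HasShift C ℤ]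
    [Preadditive C] [∀ n : ℤ, (CategoryTheory.shiftFunctor C n).Additive]
    [Pretriangulated C] [HasBinaryBiproducts C] where
  le : C → Prop
  ge : C → Prop
  le_of_isZero : ∀ X : C, IsZero X → le X
  ge_of_isZero : ∀ X : C, IsZero X → ge X
  le_of_iso : ∀ {X Y : C}, (X ≅ Y) → le X → le Y
  ge_of_iso : ∀ {X Y : C}, (X ≅ Y) → ge X → ge Y
  le_biprod : ∀ X Y : C, le X → le Y → le (X ⊞ Y)
  ge_biprod : ∀ X Y : C, ge X → ge Y → ge (X ⊞ Y)
  le_retract : ∀ (X Y : C) (i : X ⟶ Y) (p : Y ⟶ X), i ≫ p = 𝟙 X → le Y → le X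
  ge_retract : ∀ (X Y : C) (i : X ⟶ Y) (p : Y ⟶ X), i ≫ p = 𝟙 X → ge Y → ge X
  ge_shift : ∀ X : C, ge X → ge (X⟦(-1 : ℤ)⟧)
  le_shift : ∀ X : C, le X → le (X⟦(1 : ℤ)⟧)
  orth : ∀ {X Y : C}, ge X → le Y → ∀ f : X ⟶ Y⟦(1 : ℤ)⟧, f = 0
  decomp : ∀ X : C, ∃ (A B : C) (f : B ⟶ X) (g : X ⟶ A) (h : A ⟶ B⟦(1 : ℤ)⟧),
    ge (B⟦(1 : ℤ)⟧) ∧ le A ∧ Triangle.mk f g h ∈ distTriang C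

variable {C : Type*} [Category C] [HasZeroObject C] [HasShift C ℤ]
  [Preadditive C] [∀ n : ℤ, (CategoryTheory.shiftFunctor C n).Additive]
  [Pretriangulated C] [HasBinaryBiproducts C]

/-- `X ∈ 𝒞^{w≤n}`, i.e. `X⟦n⟧ ∈ 𝒞^{w≤0}`. -/
def WeightStructure.leN (w : WeightStructure C) (n : ℤ) (X : C) : Prop := w.le (X⟦n⟧)

/-- The heart `𝒞^{w=0} = 𝒞^{w≥0} ∩ 𝒞^{w≤0}`. -/
def WeightStructure.heart (w : WeightStructure C) (X : C) : Prop := w.ge X ∧ w.le X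

/-- The smallest strictly full triangulated subcategory of `C` containing a class `S` of
objects: closure of `S` under isomorphisms, shifts and cones (it contains the zero
objects). -/
inductive TriaClosure (S : C → Prop) : C → Prop
  | of (X : C) (hX : S X) : TriaClosure S X
  | zero (X : C) (hX : IsZero X) : TriaClosure S X
  | iso {X Y : C} (e : X ≅ Y) (hX : TriaClosure S X) : TriaClosure S Y
  | shift (X : C) (n : ℤ) (hX : TriaClosure S X) : TriaClosure S (X⟦n⟧)
  | cone {T : Triangle C} (hT : T ∈ distTriang C) (h₁ : TriaClosure S T.obj₁)
      (h₂ : TriaClosure S T.obj₂) : TriaClosure S T.obj₃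

/-!
Proof by induction along the generation of the triangulated closure, decomposing at every
cut `n` (weights `≥ n` on the left, `≤ n - 1` on the right). Heart objects decompose trivially,
and decompositions are transported along isomorphisms and shifts. For a cone `X₃` of
`X₁ ⟶ X₂`, decompose `X₁` at the cut `n + 1` and `X₂` at the cut `n`; by orthogonality the map
lifts to `k : A₁ ⟶ A₂`, and a morphism of triangles extends it to `c : A₃ ⟶ X₃` on its cone.
Then `A₃` has weights `≥ n` as an extension, while for every `P` of weights `≥ n` the four lemma
shows that `Hom(P, -)` turns `c` into a surjection and `c⟦1⟧` into an injection, so that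
`Hom(P, cone c) = 0` and the cone of `c` has weights `≤ n - 1`. (This detour through `Hom(P, -)`
replaces the octahedral axiom, which a pretriangulated category need not satisfy.)
-/

lemma CategoryTheory.Preadditive.injective_comp_of_comp_eq_zero {C : Type*} [Category C]
    [Preadditive C] {P X Y : C} {f : X ⟶ Y} (h : ∀ x : P ⟶ X, x ≫ f = 0 → x = 0) :
    Function.Injective (fun x : P ⟶ X => x ≫ f) :=
  (injective_iff_map_eq_zero (rightComp P f)).2 h

namespace CategoryTheory.Pretriangulated.Triangle

variable {C : Type*} [Category C] [Preadditive C] [HasZeroObject C] [HasShift C ℤ]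
  [∀ n : ℤ, (CategoryTheory.shiftFunctor C n).Additive] [Pretriangulated C]
  {T T' : Triangle C} {P : C}

open Preadditive

lemma surjective_comp_mor₁ (hT : T ∈ distTriang C) (h : ∀ f : P ⟶ T.obj₃, f = 0) :
    Function.Surjective (fun x : P ⟶ T.obj₁ => x ≫ T.mor₁) := fun y => by
  obtain ⟨x, hx⟩ := coyoneda_exact₂ T hT y (h _)
  exact ⟨x, hx.symm⟩

lemma injective_comp_shift_mor₁ (hT : T ∈ distTriang C) (h : ∀ f : P ⟶ T.obj₃, f = 0) :
    Function.Injective (fun x : P ⟶ T.obj₁⟦(1 : ℤ)⟧ => x ≫ (T.mor₁⟦1⟧')) := by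
  refine injective_comp_of_comp_eq_zero fun x hx => ?_
  obtain ⟨g, rfl⟩ := coyoneda_exact₁ T hT x hx
  rw [h g, zero_comp]

lemma surjective_comp_shift_mor₁ (hT : T ∈ distTriang C)
    (h : ∀ f : P ⟶ T.obj₃⟦(1 : ℤ)⟧, f = 0) :
    Function.Surjective (fun x : P ⟶ T.obj₁⟦(1 : ℤ)⟧ => x ≫ (T.mor₁⟦1⟧')) := fun y => by
  obtain ⟨x, hx⟩ : ∃ x : P ⟶ T.obj₁⟦(1 : ℤ)⟧, y = x ≫ (-(T.mor₁⟦1⟧')) :=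
    coyoneda_exact₁ T.rotate (rot_of_distTriang T hT) y (h _)
  exact ⟨-x, by dsimp only; rw [hx, neg_comp, comp_neg]⟩

lemma injective_comp_shift_shift_mor₁ (hT : T ∈ distTriang C)
    (h : ∀ f : P ⟶ T.obj₃⟦(1 : ℤ)⟧, f = 0) :
    Function.Injective (fun x : P ⟶ T.obj₁⟦(1 : ℤ)⟧⟦(1 : ℤ)⟧ => x ≫ (T.mor₁⟦1⟧'⟦1⟧')) := by
  refine injective_comp_of_comp_eq_zero fun x hx => ?_
  have hx' : x ≫ (-(T.mor₁⟦1⟧'))⟦1⟧' = 0 := by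
    rw [Functor.map_neg, comp_neg, hx, neg_zero]
  obtain ⟨g, rfl⟩ : ∃ g : P ⟶ T.obj₃⟦(1 : ℤ)⟧, x = g ≫ (-(T.mor₃⟦1⟧')) :=
    coyoneda_exact₁ _ (rot_of_distTriang _ (rot_of_distTriang _ (rot_of_distTriang T hT))) x hx'
  rw [h g, zero_comp]

lemma eq_zero_of_surjective_of_injective (hT : T ∈ distTriang C)
    (h₁ : Function.Surjective (fun x : P ⟶ T.obj₁ => x ≫ T.mor₁))
    (h₄ : Function.Injective (fun x : P ⟶ T.obj₁⟦(1 : ℤ)⟧ => x ≫ (T.mor₁⟦1⟧')))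
    (f : P ⟶ T.obj₃) : f = 0 := by
  have hf : f ≫ T.mor₃ = 0 :=
    h₄ (by simp only [assoc, comp_distTriang_mor_zero₃₁ T hT, comp_zero, zero_comp])
  obtain ⟨y, rfl⟩ := coyoneda_exact₃ T hT f hf
  obtain ⟨x, rfl⟩ := h₁ y
  simp only [assoc, comp_distTriang_mor_zero₁₂ T hT, comp_zero]

lemma surjective_comp_hom₃ (φ : T ⟶ T') (hT : T ∈ distTriang C) (hT' : T' ∈ distTriang C)
    (h₂ : Function.Surjective (fun x : P ⟶ T.obj₂ => x ≫ φ.hom₂))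
    (h₄ : Function.Surjective (fun x : P ⟶ T.obj₁⟦(1 : ℤ)⟧ => x ≫ (φ.hom₁⟦1⟧')))
    (h₅ : Function.Injective (fun x : P ⟶ T.obj₂⟦(1 : ℤ)⟧ => x ≫ (φ.hom₂⟦1⟧'))) :
    Function.Surjective (fun x : P ⟶ T.obj₃ => x ≫ φ.hom₃) := fun y => by
  obtain ⟨x₄, hx₄⟩ : ∃ x₄, x₄ ≫ φ.hom₁⟦1⟧' = y ≫ T'.mor₃ := h₄ _
  have hx₄' : x₄ ≫ T.mor₁⟦1⟧' = 0 := h₅ (by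
    simp only [assoc, zero_comp, ← Functor.map_comp, φ.comm₁]
    rw [Functor.map_comp, reassoc_of% hx₄, comp_distTriang_mor_zero₃₁ T' hT', comp_zero])
  obtain ⟨x₃, rfl⟩ := coyoneda_exact₁ T hT x₄ hx₄'
  obtain ⟨y₂, hy₂⟩ := coyoneda_exact₃ T' hT' (y - x₃ ≫ φ.hom₃) (by
    rw [sub_comp, assoc, ← φ.comm₃, ← assoc, hx₄, sub_self])
  obtain ⟨x₂, rfl⟩ := h₂ y₂
  refine ⟨x₃ + x₂ ≫ T.mor₂, ?_⟩
  simp only [add_comp, assoc, φ.comm₂]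
  rw [← assoc, ← hy₂, add_sub_cancel]

lemma injective_comp_hom₃ (φ : T ⟶ T') (hT : T ∈ distTriang C) (hT' : T' ∈ distTriang C)
    (h₁ : Function.Surjective (fun x : P ⟶ T.obj₁ => x ≫ φ.hom₁))
    (h₂ : Function.Injective (fun x : P ⟶ T.obj₂ => x ≫ φ.hom₂))
    (h₄ : Function.Injective (fun x : P ⟶ T.obj₁⟦(1 : ℤ)⟧ => x ≫ (φ.hom₁⟦1⟧'))) :
    Function.Injective (fun x : P ⟶ T.obj₃ => x ≫ φ.hom₃) := by
  refine injective_comp_of_comp_eq_zero fun x hx => ?_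
  obtain ⟨x₂, rfl⟩ := coyoneda_exact₃ T hT x
    (h₄ (by dsimp only; rw [assoc, φ.comm₃, reassoc_of% hx, zero_comp, zero_comp]))
  obtain ⟨y₁, hy₁⟩ := coyoneda_exact₂ T' hT' (x₂ ≫ φ.hom₂)
    (by rw [assoc, ← φ.comm₂, ← assoc, hx])
  obtain ⟨x₁, rfl⟩ := h₁ y₁
  have hx₂ : x₂ = x₁ ≫ T.mor₁ := sub_eq_zero.1 (h₂ (by
    simp only [sub_comp, assoc, φ.comm₁, hy₁, sub_self, zero_comp]))
  rw [hx₂, assoc, comp_distTriang_mor_zero₁₂ T hT, comp_zero]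

lemma injective_comp_shift_hom₃ (φ : T ⟶ T') (hT : T ∈ distTriang C)
    (hT' : T' ∈ distTriang C)
    (h₁ : Function.Surjective (fun x : P ⟶ T.obj₁⟦(1 : ℤ)⟧ => x ≫ (φ.hom₁⟦1⟧')))
    (h₂ : Function.Injective (fun x : P ⟶ T.obj₂⟦(1 : ℤ)⟧ => x ≫ (φ.hom₂⟦1⟧')))
    (h₄ : Function.Injective (fun x : P ⟶ T.obj₁⟦(1 : ℤ)⟧⟦(1 : ℤ)⟧ => x ≫ (φ.hom₁⟦1⟧'⟦1⟧'))) :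
    Function.Injective (fun x : P ⟶ T.obj₃⟦(1 : ℤ)⟧ => x ≫ (φ.hom₃⟦1⟧')) :=
  injective_comp_hom₃ ((Triangle.shiftFunctor C 1).map φ) (T.shift_distinguished hT 1)
    (T'.shift_distinguished hT' 1) h₁ h₂ h₄

end CategoryTheory.Pretriangulated.Triangle

namespace WeightStructure

variable (w : WeightStructure C)

/-- `X ∈ 𝒞^{w≥n}`, i.e. `X⟦n⟧ ∈ 𝒞^{w≥0}`. -/
def geN (n : ℤ) (X : C) : Prop := w.ge (X⟦n⟧)

variable {w}

lemma geN_shift_iff {X : C} {m n k : ℤ} (h : m + n = k) : w.geN n (X⟦m⟧) ↔ w.geN k X :=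
  have e := (shiftFunctorAdd' C m n k h).app X
  ⟨w.ge_of_iso e.symm, w.ge_of_iso e⟩

lemma leN_shift_iff {X : C} {m n k : ℤ} (h : m + n = k) : w.leN n (X⟦m⟧) ↔ w.leN k X :=
  have e := (shiftFunctorAdd' C m n k h).app X
  ⟨w.le_of_iso e.symm, w.le_of_iso e⟩

lemma geN_zero_iff {X : C} : w.geN 0 X ↔ w.ge X :=
  have e := (shiftFunctorZero C ℤ).app X
  ⟨w.ge_of_iso e, w.ge_of_iso e.symm⟩

lemma leN_zero_iff {X : C} : w.leN 0 X ↔ w.le X :=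
  have e := (shiftFunctorZero C ℤ).app X
  ⟨w.le_of_iso e, w.le_of_iso e.symm⟩

lemma geN_of_isZero {X : C} (hX : IsZero X) (n : ℤ) : w.geN n X :=
  w.ge_of_isZero _ ((shiftFunctor C n).map_isZero hX)

lemma leN_of_isZero {X : C} (hX : IsZero X) (n : ℤ) : w.leN n X :=
  w.le_of_isZero _ ((shiftFunctor C n).map_isZero hX)

lemma geN_antitone (X : C) : Antitone fun n => w.geN n X :=
  antitone_int_of_succ_le fun n h => (geN_shift_iff (by ring)).1 (w.ge_shift _ h)

lemma leN_monotone (X : C) : Monotone fun n => w.leN n X :=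
  monotone_int_of_le_succ fun n h => (leN_shift_iff (by ring)).1 (w.le_shift _ h)

lemma hom_eq_zero {n : ℤ} {P B : C} (hP : w.geN n P) (hB : w.leN (n - 1) B) (f : P ⟶ B) :
    f = 0 := by
  have e := (shiftFunctorAdd' C (n - 1) 1 n (by ring)).app B
  apply (shiftFunctor C n).map_injective
  rw [Functor.map_zero, ← cancel_mono e.hom, zero_comp]
  exact w.orth hP hB _

variable (w) in
def HasDecompositionIn (S : C → Prop) (n : ℤ) (X : C) : Prop :=
  ∃ (A X' : C) (f : A ⟶ X) (g : X ⟶ X') (h : X' ⟶ A⟦(1 : ℤ)⟧),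
    S A ∧ S X' ∧ w.geN n A ∧ w.leN (n - 1) X' ∧ Triangle.mk f g h ∈ distTriang C

variable {S : C → Prop}

namespace HasDecompositionIn

lemma of_iso {n : ℤ} {X Y : C} (e : X ≅ Y) (hX : w.HasDecompositionIn S n X) :
    w.HasDecompositionIn S n Y := by
  obtain ⟨A, X', f, g, h, hA, hX', hgeA, hleX', hT⟩ := hX
  refine ⟨A, X', f ≫ e.hom, e.inv ≫ g, h, hA, hX', hgeA, hleX',
    isomorphic_distinguished _ hT _ ?_⟩
  exact Triangle.isoMk _ _ (Iso.refl _) e.symm (Iso.refl _)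
    (by simp [Triangle.mk]) (by simp [Triangle.mk]) (by simp [Triangle.mk])

lemma shift (hS : ∀ X (m : ℤ), S X → S (X⟦m⟧)) {X : C} {m n k : ℤ} (hk : m + n = k)
    (hX : w.HasDecompositionIn S k X) : w.HasDecompositionIn S n (X⟦m⟧) := by
  obtain ⟨A, X', f, g, h, hA, hX', hgeA, hleX', hT⟩ := hX
  let T := (Triangle.shiftFunctor C m).obj (Triangle.mk f g h)
  refine ⟨A⟦m⟧, X'⟦m⟧, T.mor₁, T.mor₂, T.mor₃, hS _ _ hA, hS _ _ hX',
    (geN_shift_iff hk).2 hgeA, (leN_shift_iff (by rw [← hk]; ring)).2 hleX',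
    Triangle.shift_distinguished _ hT m⟩

end HasDecompositionIn

variable (w) in
lemma hasDecompositionIn_true (n : ℤ) (X : C) : w.HasDecompositionIn (fun _ => True) n X := by
  obtain ⟨A, B, f, g, h, hB, hA, hT⟩ := w.decomp (X⟦n - 1⟧)
  have h₁ : w.HasDecompositionIn (fun _ => True) 1 (X⟦n - 1⟧) :=
    ⟨B, A, f, g, h, trivial, trivial, hB, by rw [sub_self]; exact leN_zero_iff.2 hA, hT⟩
  exact (h₁.shift (fun _ _ _ => trivial) (by ring)).of_iso
    ((shiftFunctorCompIsoId C (n - 1) (1 - n) (by ring)).app X)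

lemma leN_of_forall_hom_eq_zero {n : ℤ} {X : C}
    (H : ∀ P, w.geN n P → ∀ f : P ⟶ X, f = 0) : w.leN (n - 1) X := by
  obtain ⟨A, B, f, g, h, -, -, hA, hB, hT⟩ := w.hasDecompositionIn_true n X
  obtain ⟨r, hr⟩ : ∃ r : B ⟶ X, 𝟙 X = g ≫ r :=
    Triangle.yoneda_exact₂ _ hT (𝟙 X) (show f ≫ 𝟙 X = 0 by rw [H A hA f, zero_comp])
  exact w.le_retract _ _ (g⟦n - 1⟧') (r⟦n - 1⟧')
    (by rw [← Functor.map_comp, ← hr, CategoryTheory.Functor.map_id]) hB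

lemma geN_of_distinguished {n : ℤ} {T : Triangle C} (hT : T ∈ distTriang C)
    (h₁ : w.geN n T.obj₁) (h₃ : w.geN n T.obj₃) : w.geN n T.obj₂ := by
  obtain ⟨A, B, f, g, h, -, -, hA, hB, hD⟩ := w.hasDecompositionIn_true n T.obj₂
  have hg : g = 0 := by
    obtain ⟨k, hk⟩ := Triangle.yoneda_exact₂ T hT g (hom_eq_zero h₁ hB _)
    rw [hk, hom_eq_zero h₃ hB k, comp_zero]
  obtain ⟨s, hs⟩ : ∃ s : T.obj₂ ⟶ A, 𝟙 T.obj₂ = s ≫ f :=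
    Triangle.coyoneda_exact₂ _ hD (𝟙 T.obj₂) (show 𝟙 T.obj₂ ≫ g = 0 by rw [hg, comp_zero])
  exact w.ge_retract _ _ (s⟦n⟧') (f⟦n⟧')
    (by rw [← Functor.map_comp, ← hs, CategoryTheory.Functor.map_id]) hA

open ZeroObject in
lemma hasDecompositionIn_of_heart (hS : ∀ Z, IsZero Z → S Z) {X : C} (hX : w.heart X)
    (hXS : S X) (n : ℤ) : w.HasDecompositionIn S n X := by
  rcases le_or_gt n 0 with hn | hn
  · exact ⟨X, 0, 𝟙 X, 0, 0, hXS, hS _ (isZero_zero C), geN_antitone X hn (geN_zero_iff.2 hX.1),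
      leN_of_isZero (isZero_zero C) _, contractible_distinguished X⟩
  · exact ⟨0, X, 0, 𝟙 X, 0, hS _ (isZero_zero C), hXS, geN_of_isZero (isZero_zero C) _,
      leN_monotone X (by omega) (leN_zero_iff.2 hX.2), contractible_distinguished₁ X⟩

lemma HasDecompositionIn.cone (hS : ∀ T ∈ distTriang C, S T.obj₁ → S T.obj₂ → S T.obj₃)
    {T : Triangle C} (hT : T ∈ distTriang C) (hT₃ : S T.obj₃) {n : ℤ}
    (h₁ : w.HasDecompositionIn S (n + 1) T.obj₁) (h₂ : w.HasDecompositionIn S n T.obj₂) :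
    w.HasDecompositionIn S n T.obj₃ := by
  obtain ⟨A₁, B₁, p₁, q₁, r₁, hA₁, hB₁, hgeA₁, hleB₁, hD₁⟩ := h₁
  obtain ⟨A₂, B₂, p₂, q₂, r₂, hA₂, hB₂, hgeA₂, hleB₂, hD₂⟩ := h₂
  obtain ⟨k, hk⟩ := Triangle.coyoneda_exact₂ _ hD₂ (p₁ ≫ T.mor₁)
    (hom_eq_zero (geN_antitone _ (by omega) hgeA₁) hleB₂ _)
  obtain ⟨A₃, l, e, hD₃⟩ := distinguished_cocone_triangle k
  obtain ⟨c, hc₂, hc₃⟩ := complete_distinguished_triangle_morphism _ T hD₃ hT p₁ p₂ hk.symm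
  let φ : Triangle.mk k l e ⟶ T :=
    { hom₁ := p₁, hom₂ := p₂, hom₃ := c, comm₁ := hk.symm, comm₂ := hc₂, comm₃ := hc₃ }
  obtain ⟨Z, g, δ, hD₄⟩ := distinguished_cocone_triangle c
  have hA₃ : S A₃ := hS _ hD₃ hA₁ hA₂
  refine ⟨A₃, Z, c, g, δ, hA₃, hS _ hD₄ hA₃ hT₃, ?_, ?_, hD₄⟩
  · exact geN_of_distinguished (rot_of_distTriang _ hD₃) hgeA₂
      ((geN_shift_iff (add_comm 1 n)).2 hgeA₁)
  refine leN_of_forall_hom_eq_zero fun P hP => ?_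
  have hB₂ : ∀ f : P ⟶ B₂, f = 0 := hom_eq_zero hP hleB₂
  have hB₁ : ∀ f : P ⟶ B₁⟦(1 : ℤ)⟧, f = 0 := hom_eq_zero hP ((leN_shift_iff (by ring)).2 hleB₁)
  exact Triangle.eq_zero_of_surjective_of_injective hD₄
    (Triangle.surjective_comp_hom₃ φ hD₃ hT (Triangle.surjective_comp_mor₁ hD₂ hB₂)
      (Triangle.surjective_comp_shift_mor₁ hD₁ hB₁) (Triangle.injective_comp_shift_mor₁ hD₂ hB₂))
    (Triangle.injective_comp_shift_hom₃ φ hD₃ hT (Triangle.surjective_comp_shift_mor₁ hD₁ hB₁)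
      (Triangle.injective_comp_shift_mor₁ hD₂ hB₂)
      (Triangle.injective_comp_shift_shift_mor₁ hD₁ hB₁))

end WeightStructure

lemma TriaClosure.hasDecompositionIn {w : WeightStructure C} {H' : C → Prop}
    (hH' : ∀ X, H' X → w.heart X) {X : C} (hX : TriaClosure H' X) (n : ℤ) :
    w.HasDecompositionIn (TriaClosure H') n X := by
  induction hX generalizing n with
  | of X hX => exact WeightStructure.hasDecompositionIn_of_heart .zero (hH' X hX) (.of X hX) n
  | zero X hX =>
    exact WeightStructure.hasDecompositionIn_of_heart .zero
      ⟨w.ge_of_isZero X hX, w.le_of_isZero X hX⟩ (.zero X hX) n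
  | iso e _ ih => exact (ih n).of_iso e
  | shift X m _ ih => exact (ih (m + n)).shift .shift rfl
  | cone hT h₁ h₂ ih₁ ih₂ =>
    exact (ih₁ (n + 1)).cone (fun _ hT => .cone hT) hT (.cone hT h₁ h₂) (ih₂ n)

theorem stmt_11_general (w : WeightStructure C) (H' : C → Prop)
    (hH' : ∀ X : C, H' X → w.heart X) :
    ∀ X : C, TriaClosure H' X →
      ∃ (A X' : C) (f : A ⟶ X) (g : X ⟶ X') (h : X' ⟶ A⟦(1 : ℤ)⟧),
        TriaClosure H' A ∧ TriaClosure H' X' ∧ w.ge A ∧ w.leN (-1) X' ∧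
        Triangle.mk f g h ∈ distTriang C := by
  intro X hX
  obtain ⟨A, X', f, g, h, hA, hX', hgeA, hleX', hT⟩ := hX.hasDecompositionIn hH' 0
  exact ⟨A, X', f, g, h, hA, hX', WeightStructure.geN_zero_iff.1 hgeA, hleX', hT⟩

/-- If `H'` is a class of objects of the heart closed under finite direct sums, then
every object `X` of the triangulated subcategory generated by `H'` admits a weight
decomposition `A → X → X' → A[1]` with `A`, `X'` again in that subcategory,
`A ∈ 𝒞^{w≥0}` and `X' ∈ 𝒞^{w<0}`. -/
theorem stmt_11 (w : WeightStructure C) (H' : C → Prop)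
    (hH' : ∀ X : C, H' X → w.heart X)
    (hsum : ∀ X Y : C, H' X → H' Y → H' (X ⊞ Y)) :
    ∀ X : C, TriaClosure H' X →
      ∃ (A X' : C) (f : A ⟶ X) (g : X ⟶ X') (h : X' ⟶ A⟦(1 : ℤ)⟧),
        TriaClosure H' A ∧ TriaClosure H' X' ∧ w.ge A ∧ w.leN (-1) X' ∧
        Triangle.mk f g h ∈ distTriang C :=
  stmt_11_general w H' hH'
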